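/- Let q be a positive integer, let X be a finite set, let F be a family of subsets of X, and let Φ(F) = Σ_{A∈F} (q+1)^{−|A|}. Then, playing a Client-Waiter game with bias q on the board X, Client has a strategy guaranteeing that at the end of the game there exists a set X_C contained in the set of elements he claimed such that |X_C| ≥ ⌊|X|/(q+1)⌋ and the number of sets A ∈ F with A ⊆ X_C is at most 2·Φ(F). -/

import Mathlib

open Finset

variable {α : Type*}

/-- Auxiliary definition: `fuel` bounds the number of remaining rounds; `C` is the set of
elements claimed by Client so far; `F` is the set of free (unclaimed) elements.
`ClientCanAux q P fuel C F` says that Client can guarantee that his final claimed set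
satisfies `P` in the Client-Waiter game with bias `q`: in each round Waiter offers a set
`O` of at least one and at most `q+1` free elements, Client claims one element of `O`,
and Waiter claims the rest. -/
def ClientCanAux [DecidableEq α] (q : ℕ) (P : Finset α → Prop) :
    ℕ → Finset α → Finset α → Prop
  | 0, C, F => F = ∅ ∧ P C
  | fuel + 1, C, F =>
    if F = ∅ then P C
    else ∀ O ⊆ F, O.Nonempty → O.card ≤ q + 1 →
      ∃ x ∈ O, ClientCanAux q P fuel (insert x C) (F \ O)

/-- Client has a strategy in the Client-Waiter game with bias `q` on the board `X`
guaranteeing that the set of elements he has claimed at the end of the game satisfies `P`. -/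
def ClientCanForce [DecidableEq α] (X : Finset α) (q : ℕ) (P : Finset α → Prop) : Prop :=
  ClientCanAux q P X.card ∅ X

/-- Analogue of `ClientCanAux` for Waiter. -/
def WaiterCanAux [DecidableEq α] (q : ℕ) (P : Finset α → Prop) :
    ℕ → Finset α → Finset α → Prop
  | 0, C, F => F = ∅ ∧ P C
  | fuel + 1, C, F =>
    if F = ∅ then P C
    else ∃ O ⊆ F, O.Nonempty ∧ O.card ≤ q + 1 ∧
      ∀ x ∈ O, WaiterCanAux q P fuel (insert x C) (F \ O)

/-- Waiter has a strategy in the Client-Waiter game with bias `q` on the board `X`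
guaranteeing that the set of elements claimed by Client at the end of the game
satisfies `P`. -/
def WaiterCanForce [DecidableEq α] (X : Finset α) (q : ℕ) (P : Finset α → Prop) : Prop :=
  WaiterCanAux q P X.card ∅ X

/-- Client's graph: the graph whose edges are the edges claimed by Client. -/
def clientGraph {V : Type*} (C : Finset (Sym2 V)) : SimpleGraph V :=
  SimpleGraph.fromEdgeSet (↑C)

/-- The board for games played on `K_n`: the edge set of the complete graph on `n` vertices. -/
def Kboard (n : ℕ) : Finset (Sym2 (Fin n)) :=
  (⊤ : SimpleGraph (Fin n)).edgeFinset

/-- `G` contains a copy of `H`. -/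
def ContainsCopy {W V : Type*} (H : SimpleGraph W) (G : SimpleGraph V) : Prop :=
  ∃ f : W → V, Function.Injective f ∧ ∀ ⦃a b : W⦄, H.Adj a b → G.Adj (f a) (f b)

/-- The 2-density `d₂(H)` of a graph `H`. -/
noncomputable def twoDensity {β : Type*} (H : SimpleGraph β) : ℝ :=
  if 3 ≤ Nat.card β then ((H.edgeSet.ncard : ℝ) - 1) / ((Nat.card β : ℝ) - 2) else 0

/-- The maximum 2-density `m₂(H)` of a graph `H`. -/
noncomputable def maxTwoDensity {β : Type*} (H : SimpleGraph β) : ℝ :=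
  sSup {x : ℝ | ∃ H' : H.Subgraph, 3 ≤ H'.verts.ncard ∧
    x = ((H'.edgeSet.ncard : ℝ) - 1) / ((H'.verts.ncard : ℝ) - 2)}

/-- The maximum density `m(G)` of a graph `G`. -/
noncomputable def maxDensity {β : Type*} (G : SimpleGraph β) : ℝ :=
  sSup {x : ℝ | ∃ G' : G.Subgraph, G'.verts.Nonempty ∧
    x = (G'.edgeSet.ncard : ℝ) / (G'.verts.ncard : ℝ)}

/-- The arboricity `ar(G)` of a graph `G`. -/
noncomputable def arboricity {β : Type*} (G : SimpleGraph β) : ℝ :=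
  sSup {x : ℝ | ∃ G' : G.Subgraph, 2 ≤ G'.verts.ncard ∧
    x = (G'.edgeSet.ncard : ℝ) / ((G'.verts.ncard : ℝ) - 1)}

/-- `H` is strictly 2-balanced: every proper subgraph with at least 3 vertices has
strictly smaller 2-density. -/
def StrictlyTwoBalanced {β : Type*} (H : SimpleGraph β) : Prop :=
  ∀ H' : H.Subgraph, H' ≠ ⊤ → 3 ≤ H'.verts.ncard → twoDensity H'.coe < twoDensity H

open Classical in
/-- The probability that Client has a winning strategy in the `H`-game `CW(G_{n,p}, H, q)`,
where the random graph `G_{n,p}` is generated by keeping each edge of `K_n` independently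
with probability `p`. -/
noncomputable def probClientWinsHGame {β : Type*} (H : SimpleGraph β) (q n : ℕ) (p : ℝ) : ℝ :=
  ∑ E ∈ (Kboard n).powerset,
    p ^ E.card * (1 - p) ^ ((Kboard n).card - E.card) *
      (if ClientCanForce E q (fun C => ContainsCopy H (clientGraph C)) then 1 else 0)

/-- Vertices of the complete `k`-ary rooted tree of height `k`: a vertex at depth `i ≤ k`
is a sequence of `i` choices among `k` children. -/
abbrev TreeVert (k : ℕ) : Type := (i : Fin (k + 1)) × (Fin (i : ℕ) → Fin k)

/-- `u` is a child of `v` in the complete `k`-ary tree. -/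
def IsChildOf {k : ℕ} (u v : TreeVert k) : Prop :=
  ∃ h : (u.1 : ℕ) = (v.1 : ℕ) + 1,
    ∀ t : Fin (v.1 : ℕ), u.2 ⟨t.1, by have := t.2; omega⟩ = v.2 t

/-- The complete `k`-ary tree of height `k`, `T_{k,k}`. -/
def Tkk (k : ℕ) : SimpleGraph (TreeVert k) where
  Adj u v := IsChildOf u v ∨ IsChildOf v u
  symm := by constructor; intro u v h; tauto
  loopless := by
    constructor
    intro u h
    rcases h with ⟨h, _⟩ | ⟨h, _⟩ <;> omega

/-!
Client maintains fractional weights `w` on the board: a free element weighs `1/(q+1)`, an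
element of Waiter weighs `0`, and when Waiter offers `r` elements, the one Client takes gets
weight `r/(q+1)`. The total weight stays `|X|/(q+1)`, and the potential
`∑_{A ∈ F} ∏_{e ∈ A} w e`, initially at most `Φ(F)`, does not increase in expectation over
Client's `r` choices (a set meeting the offer twice loses a factor `0`, one meeting it once
trades `1/(q+1)` for `(1/r) · r/(q+1)`), so Client can keep it from increasing.
At the end, pipage rounding makes all but at most one weight `0` or `1`: shifting weight between
two fractional elements keeps the total and moves the potential along a concave function, so
one of the two extreme shifts does not increase it. The elements of weight `1` form `X_C`; the
sets inside `X_C` number at most the potential, hence at most `Φ(F)`.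
-/

def potential (F : Finset (Finset α)) (w : α → ℝ) : ℝ :=
  ∑ A ∈ F, ∏ e ∈ A, w e

def HasFractionalSubset (F : Finset (Finset α)) (S B : ℝ) (C : Finset α) : Prop :=
  ∃ w : α → ℝ, (∀ e, 0 ≤ w e) ∧ (∀ e ∈ C, w e ≤ 1) ∧ S ≤ ∑ e ∈ C, w e ∧ potential F w ≤ B

lemma hasFractionalSubset_of_support_subset {F : Finset (Finset α)} {U C : Finset α}
    {w : α → ℝ} {S B : ℝ} (hCU : C ⊆ U) (hw0 : ∀ e, 0 ≤ w e) (hw1 : ∀ e, w e ≤ 1)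
    (hout : ∀ e ∉ C, w e = 0) (hS : ∑ e ∈ U, w e = S) (hB : potential F w ≤ B) :
    HasFractionalSubset F S B C :=
  ⟨w, hw0, fun e _ => hw1 e, hS ▸ (sum_subset hCU fun e _ he => hout e he).ge, hB⟩

section Rounding

variable [DecidableEq α] {C : Finset α} {w : α → ℝ} {a b e : α} {s t : ℝ}

lemma card_filter_subset_le_potential (F : Finset (Finset α)) {Xc : Finset α}
    (hw : ∀ e, 0 ≤ w e) (hXc : ∀ e ∈ Xc, w e = 1) :
    ((F.filter (· ⊆ Xc)).card : ℝ) ≤ potential F w := by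
  rw [card_filter]
  push_cast
  refine sum_le_sum fun A _ => ?_
  split_ifs with hA
  · simp [prod_eq_one fun e he => hXc e (hA he)]
  · exact prod_nonneg fun e _ => hw e

def transfer (w : α → ℝ) (a b : α) (t : ℝ) : α → ℝ :=
  w + t • (Pi.single a 1 - Pi.single b 1)

lemma transfer_apply_left (hab : a ≠ b) : transfer w a b t a = w a + t := by
  simp [transfer, hab]

lemma transfer_apply_right (hab : a ≠ b) : transfer w a b t b = w b - t := by
  simp [transfer, hab.symm, sub_eq_add_neg]

lemma transfer_apply_of_ne (ha : e ≠ a) (hb : e ≠ b) : transfer w a b t e = w e := by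
  simp [transfer, ha, hb]

lemma sum_transfer (ha : a ∈ C) (hb : b ∈ C) :
    ∑ e ∈ C, transfer w a b t e = ∑ e ∈ C, w e := by
  simp [transfer, sum_add_distrib, ← mul_sum, sum_sub_distrib, ha, hb]

lemma prod_eq_ite_mul_ite_mul_prod_sdiff (hab : a ≠ b) (A : Finset α) (f : α → ℝ) :
    ∏ e ∈ A, f e =
      (if a ∈ A then f a else 1) * (if b ∈ A then f b else 1) * ∏ e ∈ A \ {a, b}, f e := by
  rw [← prod_pair hab (f := fun e => if e ∈ A then f e else 1), prod_ite_mem, inter_comm,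
    prod_inter_mul_prod_sdiff]

/-- The factors at `a` and `b` move in opposite directions, so each product is a concave
quadratic function of the transferred amount. -/
lemma mul_prod_transfer_add_mul_prod_transfer_le (hab : a ≠ b) {A : Finset α}
    (hw : ∀ e, 0 ≤ w e) (hs : 0 ≤ s) (ht : 0 ≤ t) :
    s * ∏ e ∈ A, transfer w a b t e + t * ∏ e ∈ A, transfer w b a s e ≤
      (s + t) * ∏ e ∈ A, w e := by
  have hne : ∀ e ∈ A \ {a, b}, e ≠ a ∧ e ≠ b := fun e he => by
    simpa [not_or] using (mem_sdiff.1 he).2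
  have hrest : ∀ r, ∏ e ∈ A \ {a, b}, transfer w a b r e = ∏ e ∈ A \ {a, b}, w e ∧
      ∏ e ∈ A \ {a, b}, transfer w b a r e = ∏ e ∈ A \ {a, b}, w e := fun r =>
    ⟨prod_congr rfl fun e he => transfer_apply_of_ne (hne e he).1 (hne e he).2,
      prod_congr rfl fun e he => transfer_apply_of_ne (hne e he).2 (hne e he).1⟩
  have hR : 0 ≤ ∏ e ∈ A \ {a, b}, w e := prod_nonneg fun e _ => hw e
  rw [prod_eq_ite_mul_ite_mul_prod_sdiff hab A, prod_eq_ite_mul_ite_mul_prod_sdiff hab A,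
    prod_eq_ite_mul_ite_mul_prod_sdiff hab A w, (hrest t).1, (hrest s).2,
    transfer_apply_left hab, transfer_apply_right hab, transfer_apply_left hab.symm,
    transfer_apply_right hab.symm]
  split_ifs
  · nlinarith [mul_nonneg (mul_nonneg (mul_nonneg hs ht) (add_nonneg hs ht)) hR]
  all_goals nlinarith

lemma potential_transfer_le_or_potential_transfer_le (F : Finset (Finset α)) (hab : a ≠ b)
    (hw : ∀ e, 0 ≤ w e) (hs : 0 < s) (ht : 0 < t) :
    potential F (transfer w a b t) ≤ potential F w ∨
      potential F (transfer w b a s) ≤ potential F w := by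
  have hconc : s * potential F (transfer w a b t) + t * potential F (transfer w b a s) ≤
      (s + t) * potential F w := by
    simp only [potential, mul_sum, ← sum_add_distrib]
    exact sum_le_sum fun A _ => mul_prod_transfer_add_mul_prod_transfer_le hab hw hs.le ht.le
  by_contra! h
  nlinarith [mul_lt_mul_of_pos_left h.1 hs, mul_lt_mul_of_pos_left h.2 ht]

noncomputable def fractionalElems (C : Finset α) (w : α → ℝ) : Finset α :=
  C.filter fun e => 0 < w e ∧ w e < 1

lemma transfer_min_spec (hab : a ≠ b) (ha : a ∈ fractionalElems C w)
    (hb : b ∈ fractionalElems C w) (hw0 : ∀ e, 0 ≤ w e) (hw1 : ∀ e ∈ C, w e ≤ 1) :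
    let w' := transfer w a b (min (1 - w a) (w b))
    (∀ e, 0 ≤ w' e) ∧ (∀ e ∈ C, w' e ≤ 1) ∧ ∑ e ∈ C, w' e = ∑ e ∈ C, w e ∧
      (fractionalElems C w').card < (fractionalElems C w).card := by
  intro w'
  simp only [fractionalElems, mem_filter] at ha hb
  have hmin₁ : min (1 - w a) (w b) ≤ 1 - w a := min_le_left _ _
  have hmin₂ : min (1 - w a) (w b) ≤ w b := min_le_right _ _
  have hmin₀ : 0 ≤ min (1 - w a) (w b) := le_min (by linarith) hb.2.1.le
  have hw'a : w' a = w a + min (1 - w a) (w b) := transfer_apply_left hab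
  have hw'b : w' b = w b - min (1 - w a) (w b) := transfer_apply_right hab
  have hw'e : ∀ e, e ≠ a → e ≠ b → w' e = w e := fun e => transfer_apply_of_ne
  refine ⟨fun e => ?_, fun e he => ?_, sum_transfer ha.1 hb.1, card_lt_card ?_⟩
  · rcases eq_or_ne e a with rfl | hea
    · linarith
    rcases eq_or_ne e b with rfl | heb
    · linarith
    rw [hw'e e hea heb]; exact hw0 e
  · rcases eq_or_ne e a with rfl | hea
    · linarith
    rcases eq_or_ne e b with rfl | heb
    · linarith [hw1 e he]
    rw [hw'e e hea heb]; exact hw1 e he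
  · simp only [fractionalElems]
    refine (ssubset_iff_of_subset fun e he => ?_).2 ?_
    · rw [mem_filter] at he ⊢
      rcases eq_or_ne e a with rfl | hea
      · exact ha
      rcases eq_or_ne e b with rfl | heb
      · exact hb
      rwa [← hw'e e hea heb]
    · rcases min_choice (1 - w a) (w b) with h | h
      · exact ⟨a, mem_filter.2 ha, fun h' => by linarith [(mem_filter.1 h').2.2]⟩
      · exact ⟨b, mem_filter.2 hb, fun h' => by linarith [(mem_filter.1 h').2.1]⟩

lemma exists_rounding_step (F : Finset (Finset α)) (hab : a ≠ b) (ha : a ∈ fractionalElems C w)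
    (hb : b ∈ fractionalElems C w) (hw0 : ∀ e, 0 ≤ w e) (hw1 : ∀ e ∈ C, w e ≤ 1) :
    ∃ w' : α → ℝ, (∀ e, 0 ≤ w' e) ∧ (∀ e ∈ C, w' e ≤ 1) ∧ ∑ e ∈ C, w' e = ∑ e ∈ C, w e ∧
      (fractionalElems C w').card < (fractionalElems C w).card ∧
      potential F w' ≤ potential F w := by
  have hpos : ∀ {x y}, x ∈ fractionalElems C w → y ∈ fractionalElems C w →
      0 < min (1 - w x) (w y) := fun hx hy => by
    simp only [fractionalElems, mem_filter] at hx hy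
    exact lt_min (by linarith) hy.2.1
  rcases potential_transfer_le_or_potential_transfer_le F hab hw0 (hpos hb ha) (hpos ha hb)
    with h | h
  · obtain ⟨h0, h1, hsum, hcard⟩ := transfer_min_spec hab ha hb hw0 hw1
    exact ⟨_, h0, h1, hsum, hcard, h⟩
  · obtain ⟨h0, h1, hsum, hcard⟩ := transfer_min_spec hab.symm hb ha hw0 hw1
    exact ⟨_, h0, h1, hsum, hcard, h⟩

lemma exists_subset_of_card_fractionalElems_le_one (F : Finset (Finset α))
    (hw0 : ∀ e, 0 ≤ w e) (hw1 : ∀ e ∈ C, w e ≤ 1) (hC : (fractionalElems C w).card ≤ 1) :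
    ∃ Xc ⊆ C, ⌊∑ e ∈ C, w e⌋₊ ≤ Xc.card ∧
      ((F.filter (· ⊆ Xc)).card : ℝ) ≤ potential F w := by
  refine ⟨C.filter (w · = 1), filter_subset _ _, ?_,
    card_filter_subset_le_potential F hw0 fun e he => (mem_filter.1 he).2⟩
  have hfrac : ∑ e ∈ fractionalElems C w, w e < 1 := by
    rcases (fractionalElems C w).eq_empty_or_nonempty with h | h
    · simp [h]
    · calc ∑ e ∈ fractionalElems C w, w e < ∑ e ∈ fractionalElems C w, 1 :=
            sum_lt_sum_of_nonempty h fun e he => (mem_filter.1 he).2.2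
        _ ≤ 1 := by simpa using hC
  have hsplit : ∑ e ∈ C, w e = (C.filter (w · = 1)).card + ∑ e ∈ fractionalElems C w, w e := by
    rw [← sum_filter_add_sum_filter_not C (w · = 1)]
    congr 1
    · rw [sum_congr rfl (g := fun _ => (1 : ℝ)) fun e he => (mem_filter.1 he).2, sum_const,
        nsmul_one]
    · refine (sum_subset (fun e he => ?_) fun e he he' => ?_).symm
      · simp only [fractionalElems, mem_filter] at he ⊢
        exact ⟨he.1, he.2.2.ne⟩
      · simp only [fractionalElems, mem_filter, not_and, not_lt] at he he'
        exact le_antisymm (not_lt.1 fun h => he.2 <| le_antisymm (hw1 e he.1) (he' he.1 h))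
          (hw0 e)
  exact Nat.lt_succ_iff.1 <| (Nat.floor_lt (sum_nonneg fun e _ => hw0 e)).2 <| by
    push_cast; linarith

theorem exists_subset_floor_sum_le_card_and_card_filter_subset_le_potential
    (F : Finset (Finset α)) (C : Finset α) (w : α → ℝ) (hw0 : ∀ e, 0 ≤ w e)
    (hw1 : ∀ e ∈ C, w e ≤ 1) :
    ∃ Xc ⊆ C, ⌊∑ e ∈ C, w e⌋₊ ≤ Xc.card ∧
      ((F.filter (· ⊆ Xc)).card : ℝ) ≤ potential F w := by
  induction hn : (fractionalElems C w).card using Nat.strong_induction_on generalizing w with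
  | _ n ih =>
  rcases le_or_gt n 1 with hle | hlt
  · exact exists_subset_of_card_fractionalElems_le_one F hw0 hw1 (hn ▸ hle)
  obtain ⟨a, ha, b, hb, hab⟩ := one_lt_card.1 (hn ▸ hlt)
  obtain ⟨w', hw'0, hw'1, hsum, hcard, hpot⟩ := exists_rounding_step F hab ha hb hw0 hw1
  obtain ⟨Xc, hXc, hfloor, hF⟩ := ih _ (hn ▸ hcard) w' hw'0 hw'1 rfl
  exact ⟨Xc, hXc, hsum ▸ hfloor, hF.trans hpot⟩

theorem HasFractionalSubset.exists_subset {F : Finset (Finset α)} {S B : ℝ}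
    (h : HasFractionalSubset F S B C) :
    ∃ Xc ⊆ C, ⌊S⌋₊ ≤ Xc.card ∧ ((F.filter (· ⊆ Xc)).card : ℝ) ≤ B := by
  obtain ⟨w, hw0, hw1, hS, hB⟩ := h
  obtain ⟨Xc, hXc, hfloor, hF⟩ :=
    exists_subset_floor_sum_le_card_and_card_filter_subset_le_potential F C w hw0 hw1
  exact ⟨Xc, hXc, (Nat.floor_le_floor hS).trans hfloor, hF.trans hB⟩

end Rounding

section Game

variable [DecidableEq α]

theorem ClientCanAux.mono {q : ℕ} {P Q : Finset α → Prop} (hPQ : ∀ C, P C → Q C) :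
    ∀ {n : ℕ} {C Fr : Finset α}, ClientCanAux q P n C Fr → ClientCanAux q Q n C Fr
  | 0, _, _, h => ⟨h.1, hPQ _ h.2⟩
  | n + 1, C, Fr, h => by
    rw [ClientCanAux] at h ⊢
    split_ifs at h ⊢
    · exact hPQ _ h
    · intro O hO hne hcard
      obtain ⟨x, hx, hx'⟩ := h O hO hne hcard
      exact ⟨x, hx, ClientCanAux.mono hPQ hx'⟩

theorem ClientCanForce.mono {X : Finset α} {q : ℕ} {P Q : Finset α → Prop}
    (h : ClientCanForce X q P) (hPQ : ∀ C, P C → Q C) : ClientCanForce X q Q :=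
  ClientCanAux.mono hPQ h

/-- The weights after Client takes `x` from the offer `O`: `x` gets weight `c`, and the rest of
`O`, which goes to Waiter, gets weight `0`. -/
def claimWeights (w : α → ℝ) (O : Finset α) (x : α) (c : ℝ) : α → ℝ :=
  Function.update (O.piecewise (0 : α → ℝ) w) x c

section claimWeights

variable {w : α → ℝ} {O : Finset α} {x e : α} {c : ℝ}

@[simp] lemma claimWeights_self : claimWeights w O x c x = c := Function.update_self _ _ _

lemma claimWeights_of_mem_of_ne (he : e ∈ O) (hex : e ≠ x) : claimWeights w O x c e = 0 := by
  simp [claimWeights, hex, he]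

lemma claimWeights_of_notMem (he : e ∉ O) (hx : x ∈ O) : claimWeights w O x c e = w e := by
  simp [claimWeights, ne_of_mem_of_not_mem hx he |>.symm, he]

lemma claimWeights_nonneg (hw : ∀ e, 0 ≤ w e) (hc : 0 ≤ c) (e : α) :
    0 ≤ claimWeights w O x c e := by
  by_cases hex : e = x
  · simp [hex, hc]
  by_cases he : e ∈ O <;> simp [claimWeights, hex, he, hw e]

lemma claimWeights_le_one (hw : ∀ e, w e ≤ 1) (hc : c ≤ 1) (e : α) :
    claimWeights w O x c e ≤ 1 := by
  by_cases hex : e = x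
  · simp [hex, hc]
  by_cases he : e ∈ O <;> simp [claimWeights, hex, he, hw e]

lemma sum_claimWeights_add_sum {U : Finset α} (hOU : O ⊆ U) (hx : x ∈ O) :
    ∑ e ∈ U, claimWeights w O x c e + ∑ e ∈ O, w e = ∑ e ∈ U, w e + c := by
  have hO : ∑ e ∈ O, claimWeights w O x c e = c := by
    rw [sum_eq_single_of_mem x hx fun e he hex => claimWeights_of_mem_of_ne he hex,
      claimWeights_self]
  rw [← sum_sdiff hOU, ← sum_sdiff hOU (f := w), hO,
    sum_congr rfl fun e he => claimWeights_of_notMem (mem_sdiff.1 he).2 hx]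
  ring

end claimWeights

lemma sum_prod_claimWeights_le {O A : Finset α} {w : α → ℝ} {κ : ℝ} (hw : ∀ e, 0 ≤ w e)
    (hO : ∀ e ∈ O, w e = κ) :
    ∑ x ∈ O, ∏ e ∈ A, claimWeights w O x (O.card * κ) e ≤ O.card * ∏ e ∈ A, w e := by
  by_cases hAO : Disjoint A O
  · have hterm : ∀ x ∈ O, ∏ e ∈ A, claimWeights w O x (O.card * κ) e = ∏ e ∈ A, w e :=
      fun x hx => prod_congr rfl fun e he => claimWeights_of_notMem (disjoint_left.1 hAO he) hx
    rw [sum_congr rfl hterm, sum_const, nsmul_eq_mul]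
  · obtain ⟨y, hyA, hyO⟩ := not_disjoint_iff.1 hAO
    rw [sum_eq_single_of_mem y hyO fun x _ hxy =>
        prod_eq_zero hyA (claimWeights_of_mem_of_ne hyO hxy.symm),
      claimWeights, prod_update_of_mem hyA, prod_eq_mul_prod_sdiff_singleton y w (absurd hyA),
      hO y hyO, mul_assoc]
    have hκ : 0 ≤ κ := hO y hyO ▸ hw y
    gcongr with e
    · exact fun e _ => by by_cases he : e ∈ O <;> simp [he, hw e]
    · by_cases he : e ∈ O <;> simp [he, hw e]

lemma exists_potential_claimWeights_le (F : Finset (Finset α)) {O : Finset α} {w : α → ℝ}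
    {κ : ℝ} (hw : ∀ e, 0 ≤ w e) (hO : ∀ e ∈ O, w e = κ) (hne : O.Nonempty) :
    ∃ x ∈ O, potential F (claimWeights w O x (O.card * κ)) ≤ potential F w := by
  refine exists_le_of_sum_le hne ?_
  rw [sum_const, nsmul_eq_mul]
  simp only [potential, mul_sum]
  rw [sum_comm]
  exact sum_le_sum fun A _ => sum_prod_claimWeights_le hw hO

theorem clientCanAux_hasFractionalSubset {q : ℕ} {F : Finset (Finset α)} {U : Finset α}
    {S B : ℝ} (n : ℕ) (C Fr : Finset α) (w : α → ℝ) (hn : Fr.card ≤ n) (hCU : C ⊆ U)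
    (hFrU : Fr ⊆ U) (hw0 : ∀ e, 0 ≤ w e) (hw1 : ∀ e, w e ≤ 1)
    (hFr : ∀ e ∈ Fr, w e = ((q : ℝ) + 1)⁻¹) (hout : ∀ e, e ∉ C → e ∉ Fr → w e = 0)
    (hS : ∑ e ∈ U, w e = S) (hB : potential F w ≤ B) :
    ClientCanAux q (HasFractionalSubset F S B) n C Fr := by
  induction n generalizing C Fr w with
  | zero =>
    obtain rfl := card_eq_zero.1 (Nat.le_zero.1 hn)
    exact ⟨rfl, hasFractionalSubset_of_support_subset hCU hw0 hw1
      (fun e he => hout e he (notMem_empty e)) hS hB⟩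
  | succ n ih =>
  rw [ClientCanAux]
  split_ifs with hFr0
  · subst hFr0
    exact hasFractionalSubset_of_support_subset hCU hw0 hw1
      (fun e he => hout e he (notMem_empty e)) hS hB
  intro O hOFr hne hcard
  obtain ⟨x, hxO, hpot⟩ :=
    exists_potential_claimWeights_le F hw0 (fun e he => hFr e (hOFr he)) hne
  have hc : (O.card : ℝ) * ((q : ℝ) + 1)⁻¹ ≤ 1 := by
    rw [← div_eq_mul_inv, div_le_one (by positivity)]
    exact_mod_cast hcard
  refine ⟨x, hxO, ih _ _ _ ?_ (insert_subset (hFrU (hOFr hxO)) hCU) (sdiff_subset.trans hFrU)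
    (claimWeights_nonneg hw0 (by positivity)) (claimWeights_le_one hw1 hc) ?_ ?_ ?_
    (hpot.trans hB)⟩
  · rw [card_sdiff_of_subset hOFr]
    have := card_pos.2 hne
    omega
  · intro e he
    rw [mem_sdiff] at he
    rw [claimWeights_of_notMem he.2 hxO, hFr e he.1]
  · intro e heC heFr
    rw [mem_insert, not_or] at heC
    by_cases heO : e ∈ O
    · exact claimWeights_of_mem_of_ne heO heC.1
    · rw [claimWeights_of_notMem heO hxO]
      exact hout e heC.2 fun h => heFr (mem_sdiff.2 ⟨h, heO⟩)
  · have hOw : ∑ e ∈ O, w e = O.card * ((q : ℝ) + 1)⁻¹ := by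
      rw [sum_congr rfl fun e he => hFr e (hOFr he), sum_const, nsmul_eq_mul]
    linarith [sum_claimWeights_add_sum (w := w) (c := O.card * ((q : ℝ) + 1)⁻¹)
      (hOFr.trans hFrU) hxO]

theorem clientCanForce_hasFractionalSubset (q : ℕ) (X : Finset α) (F : Finset (Finset α)) :
    ClientCanForce X q (HasFractionalSubset F (X.card / ((q : ℝ) + 1))
      (∑ A ∈ F, (((q : ℝ) + 1) ^ A.card)⁻¹)) := by
  have hι : ((q : ℝ) + 1)⁻¹ ≤ 1 := inv_le_one_of_one_le₀ (by simp)
  let w : α → ℝ := X.piecewise (fun _ => ((q : ℝ) + 1)⁻¹) 0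
  have hι0 : 0 ≤ ((q : ℝ) + 1)⁻¹ := by positivity
  have hw0 : ∀ e, 0 ≤ w e := fun e => by by_cases he : e ∈ X <;> simp [w, he, hι0]
  have hwι : ∀ e, w e ≤ ((q : ℝ) + 1)⁻¹ := fun e => by by_cases he : e ∈ X <;> simp [w, he, hι0]
  refine clientCanAux_hasFractionalSubset (U := X) _ ∅ X w le_rfl (empty_subset X) subset_rfl
    hw0 (fun e => (hwι e).trans hι) (fun e he => piecewise_eq_of_mem _ _ _ he)
    (fun e _ he => piecewise_eq_of_notMem _ _ _ he) ?_ ?_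
  · rw [sum_congr rfl fun e he => (piecewise_eq_of_mem X _ _ he : w e = _), sum_const,
      nsmul_eq_mul, div_eq_mul_inv]
  · refine sum_le_sum fun A _ => ?_
    rw [← inv_pow, ← prod_const]
    exact prod_le_prod (fun e _ => hw0 e) fun e _ => hwι e

end Game

theorem stmt10_general {α : Type*} [DecidableEq α] (q : ℕ) (X : Finset α)
    (F : Finset (Finset α)) :
    ClientCanForce X q (fun Cl => ∃ Xc ⊆ Cl,
      X.card / (q + 1) ≤ Xc.card ∧
      (((F.filter (fun A => A ⊆ Xc)).card : ℝ)) ≤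
        2 * ∑ A ∈ F, (((q : ℝ) + 1) ^ A.card)⁻¹) := by
  refine (clientCanForce_hasFractionalSubset q X F).mono fun C hC => ?_
  obtain ⟨Xc, hXcC, hfloor, hF⟩ := hC.exists_subset
  have hΦ : 0 ≤ ∑ A ∈ F, (((q : ℝ) + 1) ^ A.card)⁻¹ := sum_nonneg fun A _ => by positivity
  refine ⟨Xc, hXcC, ?_, by linarith⟩
  rw [← Nat.floor_div_eq_div (K := ℝ)]
  exact_mod_cast hfloor

/-- Theorem (tool): playing a Client-Waiter game on `X` with bias `q`, Client has a
strategy to claim a set containing a subset `X_C` of size at least `⌊|X|/(q+1)⌋` which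
fully contains at most `2 Φ(F)` sets of `F`, where `Φ(F) = Σ_{A ∈ F} (q+1)^{-|A|}`. -/
theorem stmt10 {α : Type*} [DecidableEq α] (q : ℕ) (hq : 0 < q) (X : Finset α)
    (F : Finset (Finset α)) :
    ClientCanForce X q (fun Cl => ∃ Xc ⊆ Cl,
      X.card / (q + 1) ≤ Xc.card ∧
      (((F.filter (fun A => A ⊆ Xc)).card : ℝ)) ≤
        2 * ∑ A ∈ F, (((q : ℝ) + 1) ^ A.card)⁻¹) :=
  stmt10_general q X F
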